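/- (Cluster Attack is exactly optimal when there are at least as many fake nodes as victim nodes.) Suppose N ≥ |I| and a clustered assignment (c', μ') minimizes the cluster distance, i.e. Dist(c', μ') ≤ Dist(c, μ) for every clustered assignment (c, μ) with N clusters. Then for every clustered assignment (c, μ) with N clusters, Σ_{i∈I} l i (μ'(c'(i))) ≤ Σ_{i∈I} l i (μ(c(i))). -/

import Mathlib

/-- The cluster distance of a clustered assignment `(c, μ)`:
`Dist(c, μ) = Σ_{i ∈ I} ‖x*(i) − μ(c(i))‖²`. -/
noncomputable def clusterDist {I : Type*} [Fintype I] {D N : ℕ}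
    (xstar : I → EuclideanSpace ℝ (Fin D))
    (c : I → Fin N) (μ : Fin N → EuclideanSpace ℝ (Fin D)) : ℝ :=
  ∑ i : I, ‖xstar i - μ (c i)‖ ^ 2

/-
With at least as many clusters as points, sending every point to its own cluster centred at
the point itself has cluster distance zero, so a minimizer places each `μ' (c' i)` exactly at
`x*(i)`. The lower W-bound with `m i ≥ 0` says that `x*(i)` minimizes `l i`, hence the minimizer
of the cluster distance also minimizes every summand of the loss.
-/

section ClusterDist

variable {I : Type*} [Fintype I] {D N : ℕ} (xstar : I → EuclideanSpace ℝ (Fin D))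

theorem clusterDist_nonneg (c : I → Fin N) (μ : Fin N → EuclideanSpace ℝ (Fin D)) :
    0 ≤ clusterDist xstar c μ :=
  Finset.sum_nonneg fun _ _ => sq_nonneg _

theorem clusterDist_eq_zero_iff (c : I → Fin N) (μ : Fin N → EuclideanSpace ℝ (Fin D)) :
    clusterDist xstar c μ = 0 ↔ ∀ i, μ (c i) = xstar i := by
  simp only [clusterDist, Finset.sum_eq_zero_iff_of_nonneg (fun _ _ => sq_nonneg _),
    Finset.mem_univ, true_implies, sq_eq_zero_iff, norm_eq_zero, sub_eq_zero]
  exact forall_congr' fun _ => eq_comm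

theorem exists_clusterDist_eq_zero (hNI : Fintype.card I ≤ N) :
    ∃ (c : I → Fin N) (μ : Fin N → EuclideanSpace ℝ (Fin D)), clusterDist xstar c μ = 0 := by
  obtain ⟨c⟩ := Function.Embedding.nonempty_of_card_le (hNI.trans_eq (Fintype.card_fin N).symm)
  exact ⟨c, Function.extend c xstar 0,
    (clusterDist_eq_zero_iff xstar _ _).2 (c.injective.extend_apply xstar 0)⟩

theorem apply_eq_of_forall_clusterDist_le (hNI : Fintype.card I ≤ N) (c' : I → Fin N)
    (μ' : Fin N → EuclideanSpace ℝ (Fin D))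
    (hdist : ∀ (c : I → Fin N) (μ : Fin N → EuclideanSpace ℝ (Fin D)),
      clusterDist xstar c' μ' ≤ clusterDist xstar c μ) (i : I) :
    μ' (c' i) = xstar i := by
  obtain ⟨c, μ, hzero⟩ := exists_clusterDist_eq_zero xstar hNI
  have hle : clusterDist xstar c' μ' ≤ 0 := hzero ▸ hdist c μ
  exact (clusterDist_eq_zero_iff xstar c' μ').1 (hle.antisymm (clusterDist_nonneg xstar c' μ')) i

end ClusterDist

theorem apply_le_of_forall_mul_sq_norm_sub_le {E : Type*} [SeminormedAddCommGroup E]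
    {f : E → ℝ} {x₀ : E} {m : ℝ} (hm : 0 ≤ m) (hf : ∀ x, m * ‖x - x₀‖ ^ 2 ≤ f x - f x₀) (x : E) :
    f x₀ ≤ f x := by
  linarith [hf x, mul_nonneg hm (sq_nonneg ‖x - x₀‖)]

theorem cluster_attack_optimal_many_fake_nodes_general
    {I : Type*} [Fintype I] (D N : ℕ)
    (hNI : Fintype.card I ≤ N)
    (xstar : I → EuclideanSpace ℝ (Fin D))
    (l : I → EuclideanSpace ℝ (Fin D) → ℝ) (m M : I → ℝ)
    (hm0 : ∀ i, 0 ≤ m i)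
    (hW : ∀ (i : I) (x : EuclideanSpace ℝ (Fin D)),
      m i * ‖x - xstar i‖ ^ 2 ≤ l i x - l i (xstar i) ∧
        l i x - l i (xstar i) ≤ M i * ‖x - xstar i‖ ^ 2)
    (c' : I → Fin N) (μ' : Fin N → EuclideanSpace ℝ (Fin D))
    (hdist : ∀ (c : I → Fin N) (μ : Fin N → EuclideanSpace ℝ (Fin D)),
      clusterDist xstar c' μ' ≤ clusterDist xstar c μ) :
    ∀ (c : I → Fin N) (μ : Fin N → EuclideanSpace ℝ (Fin D)),
      ∑ i : I, l i (μ' (c' i)) ≤ ∑ i : I, l i (μ (c i)) := by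
  intro c μ
  refine Finset.sum_le_sum fun i _ => ?_
  rw [apply_eq_of_forall_clusterDist_le xstar hNI c' μ' hdist i]
  exact apply_le_of_forall_mul_sq_norm_sub_le (hm0 i) (fun x => (hW i x).1) _

/-- Cluster Attack is exactly optimal when there are at least as many fake nodes
as victim nodes: if `N ≥ |I|` and `(c', μ')` minimizes the cluster distance, then
`(c', μ')` also minimizes the total adversarial loss. -/
theorem cluster_attack_optimal_many_fake_nodes
    {I : Type*} [Fintype I] [Nonempty I] (D N : ℕ) (hD : 0 < D) (hN : 0 < N)
    (hNI : Fintype.card I ≤ N)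
    (xstar : I → EuclideanSpace ℝ (Fin D))
    (l : I → EuclideanSpace ℝ (Fin D) → ℝ) (m M : I → ℝ)
    (hm0 : ∀ i, 0 ≤ m i) (hmM : ∀ i, m i ≤ M i)
    (hW : ∀ (i : I) (x : EuclideanSpace ℝ (Fin D)),
      m i * ‖x - xstar i‖ ^ 2 ≤ l i x - l i (xstar i) ∧
        l i x - l i (xstar i) ≤ M i * ‖x - xstar i‖ ^ 2)
    (c' : I → Fin N) (μ' : Fin N → EuclideanSpace ℝ (Fin D))
    (hdist : ∀ (c : I → Fin N) (μ : Fin N → EuclideanSpace ℝ (Fin D)),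
      clusterDist xstar c' μ' ≤ clusterDist xstar c μ) :
    ∀ (c : I → Fin N) (μ : Fin N → EuclideanSpace ℝ (Fin D)),
      ∑ i : I, l i (μ' (c' i)) ≤ ∑ i : I, l i (μ (c i)) :=
  cluster_attack_optimal_many_fake_nodes_general D N hNI xstar l m M hm0 hW c' μ' hdist
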